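/- Let G be a finite simple graph admitting a Grundy coloring in which some vertex receives a color k ≥ 4. Then the subgraph of G induced by the vertices that this Grundy coloring colors with a color at least 3 contains at least (k−3)(k−2)/2 edges. -/

import Mathlib

set_option linter.unusedSectionVars false

open scoped ENNReal

attribute [local instance] Classical.propDecidable

noncomputable section

namespace DGC

/-! ### Markov chains and expected hitting times -/

/-- `survive K A t s` is the probability that the Markov chain with transition kernel `K`,
started at `s`, has not visited the set `A` within its first `t` steps
(time `0` counts: if `s ∈ A` the chain has hit `A` at time `0`). -/
def survive {S : Type*} (K : S → PMF S) (A : Set S) : ℕ → S → ℝ≥0∞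
  | 0, s => if s ∈ A then 0 else 1
  | (t + 1), s => if s ∈ A then 0 else ∑' s', K s s' * survive K A t s'

/-- The expected hitting time of the set `A` for the Markov chain with kernel `K`
started at `s`; it equals `∑_{t ≥ 0} Pr[T > t]` where `T = min {t : X_t ∈ A}`, and it is `∞`
if `A` is reached with probability less than one. -/
def expectedHitting {S : Type*} (K : S → PMF S) (A : Set S) (s : S) : ℝ≥0∞ :=
  ∑' t, survive K A t s

/-- `log⁺ T = max {1, ln T}`. -/
def logPlus (T : ℕ) : ℝ := max 1 (Real.log T)

variable {V : Type*} [Fintype V] [DecidableEq V]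

/-! ### Colorings, conflicts -/

/-- A coloring (a map `V → ℕ`, colors being `1,2,3,…`) is proper if no edge is monochromatic. -/
def IsProper (G : SimpleGraph V) (c : V → ℕ) : Prop :=
  ∀ u v, G.Adj u v → c u ≠ c v

/-- The set of conflicting edges of the coloring `c`. -/
def conflictSet (G : SimpleGraph V) (c : V → ℕ) : Set (Sym2 V) :=
  {e | e ∈ G.edgeSet ∧ ∃ u v, e = s(u, v) ∧ c u = c v}

/-- The number of conflicting edges of the coloring `c`. -/
def numConflicts (G : SimpleGraph V) (c : V → ℕ) : ℕ :=
  (conflictSet G c).ncard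

/-- The set of proper 2-colorings (with color set `{1,2}`). -/
def properTwoColorings (G : SimpleGraph V) : Set (V → ℕ) :=
  {c | IsProper G c ∧ ∀ v, c v = 1 ∨ c v = 2}

/-- Vertices that are an endpoint of some conflicting edge. -/
def conflictVerts (G : SimpleGraph V) (c : V → ℕ) : Finset V :=
  Finset.univ.filter fun v => ∃ u, G.Adj v u ∧ c v = c u

/-! ### RLS and the (1+1) EA with `k = 2` colors (palette `{1,2}`) -/

/-- Recolor vertex `v` with the unique other color of the palette `{1,2}`. -/
def flip (c : V → ℕ) (v : V) : V → ℕ := Function.update c v (3 - c v)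

/-- One iteration of RLS with `k = 2` colors: choose a vertex `v` uniformly at random,
recolor it with the other color, and accept iff the number of conflicting edges
does not increase. -/
def rls2 (G : SimpleGraph V) (c : V → ℕ) : PMF (V → ℕ) :=
  if h : Nonempty V then
    (@PMF.uniformOfFintype V _ h).map fun v =>
      if numConflicts G (flip c v) ≤ numConflicts G c then flip c v else c
  else PMF.pure c

/-- A `PMF` which assigns probability `p` to `true` and `1 - p` to `false` (the older
`PMF.bernoulli`, with `p : ℝ≥0∞`). -/
def bernoulliPMF (p : ℝ≥0∞) (h : p ≤ 1) : PMF Bool :=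
  PMF.ofFintype (fun b => cond b p (1 - p)) (by simp [h])

/-- Independent Bernoulli choices along a list of vertices. -/
def flipsAux (p : V → ℝ≥0∞) (h : ∀ v, p v ≤ 1) : List V → PMF (V → Bool)
  | [] => PMF.pure fun _ => false
  | v :: vs =>
      (bernoulliPMF (p v) (h v)).bind fun b =>
        (flipsAux p h vs).map fun g => Function.update g v b

/-- A random subset of the vertices (as an indicator function), where each vertex `v` is
included independently with probability `p v`. -/
def flips (p : V → ℝ≥0∞) (h : ∀ v, p v ≤ 1) : PMF (V → Bool) :=
  flipsAux p h Finset.univ.toList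

/-- `1/|V|` (or `0` for the empty graph). -/
def invCard (V : Type*) [Fintype V] : ℝ≥0∞ :=
  if 0 < Fintype.card V then (Fintype.card V : ℝ≥0∞)⁻¹ else 0

lemma invCard_le_one : invCard V ≤ 1 := by
  unfold invCard
  split
  · rw [ENNReal.inv_le_one]
    exact_mod_cast ‹0 < Fintype.card V›
  · exact zero_le_one

lemma half_le_one : (1 / 2 : ℝ≥0∞) ≤ 1 := by
  rw [ENNReal.div_le_iff (by norm_num) (by norm_num)]
  norm_num

/-- Recolor (within the palette `{1,2}`) exactly the vertices selected by `bs`. -/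
def mutate2 (c : V → ℕ) (bs : V → Bool) : V → ℕ := fun v => if bs v then 3 - c v else c v

/-- One iteration of the (1+1) EA with `k = 2` colors: every vertex is independently
recolored with probability `1/n`, and the offspring is accepted iff its number of
conflicting edges is not larger. -/
def ea2 (G : SimpleGraph V) (c : V → ℕ) : PMF (V → ℕ) :=
  (flips (fun _ => invCard V) (fun _ => invCard_le_one)).map fun bs =>
    if numConflicts G (mutate2 c bs) ≤ numConflicts G c then mutate2 c bs else c

/-- One iteration of the tailored (1+1) EA with `k = 2` colors: every endpoint of a
conflicting edge is independently recolored with probability `1/2`, every other vertex with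
probability `1/n`; the offspring is accepted iff its number of conflicting edges is
not larger. -/
def tailoredEA2 (G : SimpleGraph V) (c : V → ℕ) : PMF (V → ℕ) :=
  (flips (fun v => if v ∈ conflictVerts G c then 1 / 2 else invCard V)
      (fun v => by try dsimp only
                   split; exacts [half_le_one, invCard_le_one])).map fun bs =>
    if numConflicts G (mutate2 c bs) ≤ numConflicts G c then mutate2 c bs else c

/-- One iteration of the tailored RLS with `k = 2` colors: with probability `1/2` a vertex is
chosen uniformly at random among the endpoints of conflicting edges (if any exist), otherwise
uniformly at random among all vertices; it is recolored with the other color, and the move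
is accepted iff the number of conflicting edges does not increase. -/
def tailoredRls2 (G : SimpleGraph V) (c : V → ℕ) : PMF (V → ℕ) :=
  if hV : Nonempty V then
    (bernoulliPMF (1 / 2) half_le_one).bind fun coin =>
      (if h : coin = true ∧ (conflictVerts G c).Nonempty
        then PMF.uniformOfFinset (conflictVerts G c) h.2
        else @PMF.uniformOfFintype V _ hV).map fun v =>
        if numConflicts G (flip c v) ≤ numConflicts G c then flip c v else c
  else PMF.pure c

/-! ### Grundy colorings and Grundy local search -/

/-- The smallest color (from `{1,2,3,…}`) not used by any neighbor of `v`. -/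
def smallestFree (G : SimpleGraph V) (c : V → ℕ) (v : V) : ℕ :=
  sInf {i | 1 ≤ i ∧ ∀ u, G.Adj v u → c u ≠ i}

/-- A coloring is a Grundy coloring iff every vertex has the smallest color not used by any
of its neighbors (equivalently: it is proper, and every vertex `v` has, for every color
`i < c v`, an `i`-colored neighbor). -/
def IsGrundy (G : SimpleGraph V) (c : V → ℕ) : Prop :=
  ∀ v, c v = smallestFree G c v

/-- One step of Grundy local search: some vertex whose color is not the smallest color absent
from its neighborhood is recolored with the smallest color not used by any of its neighbors. -/
def glsStep (G : SimpleGraph V) (c c' : V → ℕ) : Prop :=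
  ∃ v, c v ≠ smallestFree G c v ∧ c' = Function.update c v (smallestFree G c v)

/-- `glsRun G c c'` holds iff `c'` is a possible outcome of a (maximal) run of Grundy local
search started at `c`: it is reachable from `c` by Grundy local search steps and is a
Grundy coloring. -/
def glsRun (G : SimpleGraph V) (c c' : V → ℕ) : Prop :=
  Relation.ReflTransGen (glsStep G) c c' ∧ IsGrundy G c'

/-- The Grundy number of `G`: the largest color used by any Grundy coloring of `G`. -/
def grundyNumber (G : SimpleGraph V) : ℕ :=
  sSup {k | ∃ c v, IsGrundy G c ∧ c v = k}

/-! ### Kempe chains, color eliminations, and iterated local search -/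

/-- The restriction of `G` to the vertex set `S` (an induced subgraph on the same
vertex type). -/
def restrict (G : SimpleGraph V) (S : Set V) : SimpleGraph V where
  Adj u w := G.Adj u w ∧ u ∈ S ∧ w ∈ S
  symm := ⟨fun u w h => ⟨h.1.symm, h.2.2, h.2.1⟩⟩
  loopless := ⟨fun u h => G.irrefl h.1⟩

/-- `H_j(v)`: the connected component containing `v` of the subgraph of `G` induced by the
vertices colored `c v` or `j`. -/
def kempeSet (G : SimpleGraph V) (c : V → ℕ) (v : V) (j : ℕ) : Set V :=
  {u | (restrict G {w | c w = c v ∨ c w = j}).Reachable v u}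

/-- The Kempe chain operation `(v, j)`: swap the colors `c v` and `j` on all vertices of
`H_j(v)`. -/
def kempeSwap (G : SimpleGraph V) (c : V → ℕ) (v : V) (j : ℕ) : V → ℕ := fun u =>
  if u ∈ kempeSet G c v j then
    if c u = c v then j else if c u = j then c v else c u
  else c u

/-- The union `H_j(v₁) ∪ … ∪ H_j(v_ℓ)` over all `i`-colored neighbors `v₁, …, v_ℓ` of `v`. -/
def ceSet (G : SimpleGraph V) (c : V → ℕ) (v : V) (i j : ℕ) : Set V :=
  {u | ∃ w, G.Adj v w ∧ c w = i ∧ (restrict G {x | c x = i ∨ c x = j}).Reachable w u}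

/-- The color elimination at `v` with colors `i, j`: swap colors `i` and `j` on
`H_j(v₁) ∪ … ∪ H_j(v_ℓ)`, where `v₁, …, v_ℓ` are the `i`-colored neighbors of `v`. -/
def ceSwap (G : SimpleGraph V) (c : V → ℕ) (v : V) (i j : ℕ) : V → ℕ := fun u =>
  if u ∈ ceSet G c v i j then
    if c u = i then j else if c u = j then i else c u
  else c u

/-- `n_i(c)`: the number of `i`-colored vertices of the coloring `c`. -/
def colorCount (c : V → ℕ) (i : ℕ) : ℕ := (Finset.univ.filter fun v => c v = i).card

/-- The selection order `x ⪰ y`: `x` has fewer conflicting edges than `y`, or equally many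
and the color frequencies satisfy `n_i(x) = n_i(y)` for all `i`, or `n_i(x) < n_i(y)` for the
largest index `i` with `n_i(x) ≠ n_i(y)`. -/
def Pref (G : SimpleGraph V) (x y : V → ℕ) : Prop :=
  numConflicts G x < numConflicts G y ∨
    (numConflicts G x = numConflicts G y ∧
      ((∀ i, colorCount x i = colorCount y i) ∨
        ∃ i, colorCount x i < colorCount y i ∧ ∀ k, i < k → colorCount x k = colorCount y k))

/-- One iteration of ILS with Kempe chains, where `gls` is the (arbitrary, but fixed) rule
producing the outcome of a run of Grundy local search: choose `v` uniformly at random and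
`j ∈ {1, …, deg(v) + 1}` uniformly at random, apply the Kempe chain operation `(v, j)`,
apply Grundy local search, and accept the result `z` iff `z ⪰ x`. -/
def ilsKempe (G : SimpleGraph V) (gls : (V → ℕ) → (V → ℕ)) (x : V → ℕ) :
    PMF (V → ℕ) :=
  if hV : Nonempty V then
    (@PMF.uniformOfFintype V _ hV).bind fun v =>
      (PMF.uniformOfFinset (Finset.Icc 1 (G.degree v + 1))
          ⟨1, by simp only [Finset.mem_Icc]; omega⟩).map fun j =>
        let z := gls (kempeSwap G x v j)
        if Pref G z x then z else x
  else PMF.pure x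

/-- The pairs of distinct colors `i ≠ j` with `i, j ∈ {1, …, c v − 1}`. -/
def cePairs (x : V → ℕ) (v : V) : Finset (ℕ × ℕ) :=
  ((Finset.Icc 1 (x v - 1)) ×ˢ (Finset.Icc 1 (x v - 1))).filter fun p => p.1 ≠ p.2

lemma cePairs_nonempty {x : V → ℕ} {v : V} (h : 3 ≤ x v) : (cePairs x v).Nonempty :=
  ⟨(1, 2), by simp only [cePairs, Finset.mem_filter, Finset.mem_product, Finset.mem_Icc]; omega⟩

/-- One iteration of ILS with color eliminations, where `gls` is the (arbitrary, but fixed)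
rule producing the outcome of a run of Grundy local search: choose `v` uniformly at random;
if `c v ≥ 3`, choose distinct `i, j ∈ {1, …, c v − 1}` uniformly at random and apply the
corresponding color elimination; apply Grundy local search, and accept the result `z`
iff `z ⪰ x`. -/
def ilsCE (G : SimpleGraph V) (gls : (V → ℕ) → (V → ℕ)) (x : V → ℕ) :
    PMF (V → ℕ) :=
  if hV : Nonempty V then
    (@PMF.uniformOfFintype V _ hV).bind fun v =>
      if h : 3 ≤ x v then
        (PMF.uniformOfFinset (cePairs x v) (cePairs_nonempty h)).map fun p =>
          let z := gls (ceSwap G x v p.1 p.2)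
          if Pref G z x then z else x
      else PMF.pure x
  else PMF.pure x



lemma tri_aux (m : ℕ) : m*(m+1)/2 + (m+1) = (m+1)*(m+2)/2 := by
  rw [← Nat.add_mul_div_left (m*(m+1)) (m+1) (by norm_num : (0:ℕ) < 2)]
  congr 1; ring

lemma tri (k : ℕ) : ∑ j ∈ Finset.Icc 4 k, (j - 3) = (k-3)*(k-2)/2 := by
  rcases lt_or_ge k 4 with h | h
  · rw [Finset.Icc_eq_empty (by omega)]
    have h3 : k - 3 = 0 := by omega
    simp [h3]
  · induction k, h using Nat.le_induction with
    | base => simp [Finset.Icc_self]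
    | succ k hk ih =>
        rw [Finset.sum_Icc_succ_top (by omega : 4 ≤ k+1), ih]
        obtain ⟨m, rfl⟩ : ∃ m, k = m + 3 := ⟨k - 3, by omega⟩
        have e1 : m + 3 - 3 = m := by omega
        have e2 : m + 3 - 2 = m + 1 := by omega
        have e4 : m + 3 + 1 - 3 = m + 1 := by omega
        rw [e1, e2, e4]
        rw [show m + 4 - 2 = m + 2 by omega]
        exact tri_aux m


/-- Let `G` be a finite simple graph admitting a Grundy coloring in which
some vertex receives a color `k ≥ 4`. Then the subgraph of `G` induced by the vertices that
this Grundy coloring colors with a color at least `3` contains at least `(k−3)(k−2)/2`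
edges. -/
theorem stmt9 {V : Type*} [Fintype V] [DecidableEq V] (G : SimpleGraph V)
    (c : V → ℕ) (hc : IsGrundy G c) (k : ℕ) (hk : 4 ≤ k) (v : V) (hv : c v = k) :
    (k - 3) * (k - 2) / 2 ≤ {e | e ∈ G.edgeSet ∧ ∀ u ∈ e, 3 ≤ c u}.ncard := by
  classical
  -- every vertex has a neighbor of each color below its own
  have hgr : ∀ u i, 1 ≤ i → i < c u → ∃ w, G.Adj u w ∧ c w = i := by
    intro u i h1 h2
    by_contra h
    push_neg at h
    have hmem : i ∈ {i | 1 ≤ i ∧ ∀ w, G.Adj u w → c w ≠ i} := ⟨h1, h⟩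
    have hle := Nat.sInf_le hmem
    have hcu := hc u
    rw [smallestFree] at hcu
    omega
  have hvert : ∀ j, 4 ≤ j → j ≤ k → ∃ u, c u = j := by
    intro j h4 hjk
    rcases eq_or_lt_of_le hjk with rfl | hlt
    · exact ⟨v, hv⟩
    · obtain ⟨w, _, hw⟩ := hgr v j (by omega) (by omega)
      exact ⟨w, hw⟩
  set S : Set (Sym2 V) := {e | e ∈ G.edgeSet ∧ ∀ u ∈ e, 3 ≤ c u} with hSdef
  have hS : S.Finite := Set.toFinite S
  set T : Finset ((_ : ℕ) × ℕ) := (Finset.Icc 4 k).sigma (fun j => Finset.Icc 3 (j-1)) with hTdef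
  have hTmem : ∀ p : (_ : ℕ) × ℕ, p ∈ T → 4 ≤ p.1 ∧ p.1 ≤ k ∧ 3 ≤ p.2 ∧ p.2 < p.1 := by
    intro p hp
    rw [hTdef, Finset.mem_sigma, Finset.mem_Icc, Finset.mem_Icc] at hp
    omega
  have key : ∀ p : (_ : ℕ) × ℕ, p ∈ T → ∃ u w, G.Adj u w ∧ c u = p.1 ∧ c w = p.2 := by
    intro p hp
    obtain ⟨h4, hpk, h3, hlt⟩ := hTmem p hp
    obtain ⟨u, hu⟩ := hvert p.1 h4 hpk
    obtain ⟨w, haw, hw⟩ := hgr u p.2 (by omega) (by omega)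
    exact ⟨u, w, haw, hu, hw⟩
  set f : ((_ : ℕ) × ℕ) → Sym2 V := fun p =>
    if h : ∃ u w, G.Adj u w ∧ c u = p.1 ∧ c w = p.2 then
      s(h.choose, h.choose_spec.choose) else s(v, v) with hfdef
  have hfspec : ∀ p : (_ : ℕ) × ℕ, p ∈ T →
      ∃ u w, G.Adj u w ∧ c u = p.1 ∧ c w = p.2 ∧ f p = s(u, w) := by
    intro p hp
    have h := key p hp
    refine ⟨h.choose, h.choose_spec.choose, h.choose_spec.choose_spec.1,
      h.choose_spec.choose_spec.2.1, h.choose_spec.choose_spec.2.2, ?_⟩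
    rw [hfdef]
    exact dif_pos h
  have hmaps : ∀ p ∈ T, f p ∈ hS.toFinset := by
    intro p hp
    obtain ⟨u, w, haw, hu, hw, hfp⟩ := hfspec p hp
    obtain ⟨h4, hpk, h3, hlt⟩ := hTmem p hp
    rw [Set.Finite.mem_toFinset, hfp, hSdef]
    refine ⟨haw, ?_⟩
    intro x hx
    rw [Sym2.mem_iff] at hx
    rcases hx with rfl | rfl <;> omega
  have hinj : Set.InjOn f ↑T := by
    intro p hp q hq hfeq
    obtain ⟨u, w, haw, hu, hw, hfp⟩ := hfspec p hp
    obtain ⟨u', w', haw', hu', hw', hfq⟩ := hfspec q hq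
    obtain ⟨h4, hpk, h3, hlt⟩ := hTmem p hp
    obtain ⟨h4', hpk', h3', hlt'⟩ := hTmem q hq
    rw [hfp, hfq, Sym2.eq_iff] at hfeq
    obtain ⟨j, i⟩ := p
    obtain ⟨j', i'⟩ := q
    simp only at hu hw hu' hw' h4 hpk h3 hlt h4' hpk' h3' hlt' ⊢
    rcases hfeq with ⟨rfl, rfl⟩ | ⟨rfl, rfl⟩ <;>
      · obtain rfl : j = j' := by omega
        obtain rfl : i = i' := by omega
        rfl
  have hcard : T.card ≤ hS.toFinset.card := Finset.card_le_card_of_injOn f hmaps hinj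
  have hTcard : T.card = (k - 3) * (k - 2) / 2 := by
    rw [hTdef, Finset.card_sigma, ← tri k]
    refine Finset.sum_congr rfl ?_
    intro j hj
    rw [Finset.mem_Icc] at hj
    rw [Nat.card_Icc]
    omega
  rw [Set.ncard_eq_toFinset_card S hS]
  omega

end DGC
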